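/- Define recursively Φ_l^{(0)} = Φ_l and Φ_l^{(m+1)} = Φ₁^{(m)}·(Φ_{l+1}^{(m)}/Φ₁^{(m)})′ for 0 ≤ m < k (the non-standard Darboux orbit of the ghost-symmetry generating eigenfunctions, eq. (DB-eigenf) of the paper). Then for all l ≥ 1 with k + l ≤ N, Φ_l^{(k)} = W[Φ₁,…,Φ_k,Φ_{k+l}]/W[Φ₁,…,Φ_k]; in particular the k-step Darboux transform of Φ₁ equals the ratio of consecutive Wronskians, Φ₁^{(k)} = W_{k+1}/W_k (the eigenfunction form of the paper's eq. (DB-1-k)). -/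

import Mathlib

/-- Wronskian of an `m`-tuple of functions of one real variable:
`det(f_j^{(i−1)})_{1≤i,j≤m}`, with the `0×0` determinant (`W[] = 1`) equal to `1`. -/
noncomputable def wronskian (m : ℕ) (g : Fin m → ℝ → ℝ) : ℝ → ℝ :=
  fun x => (Matrix.of fun i j : Fin m => iteratedDeriv (i : ℕ) (g j) x).det

section aux
open Matrix

lemma hasDerivAt_iteratedDeriv {f : ℝ → ℝ} (hf : ContDiff ℝ (⊤ : ℕ∞) f) (i : ℕ) (x : ℝ) :
    HasDerivAt (iteratedDeriv i f) (iteratedDeriv (i + 1) f x) x := by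
  rw [iteratedDeriv_succ]
  exact ((hf.differentiable_iteratedDeriv i (by exact_mod_cast lt_top_iff_ne_top.mpr (by simp))) x).hasDerivAt

lemma hasDerivAt_wronskian (n : ℕ) (g : Fin n → ℝ → ℝ) (hg : ∀ j, ContDiff ℝ (⊤ : ℕ∞) (g j)) (x : ℝ) :
    HasDerivAt (wronskian n g)
      (∑ r : Fin n, ((Matrix.of fun i j : Fin n => iteratedDeriv (i : ℕ) (g j) x).updateRow r
        (fun j => iteratedDeriv ((r : ℕ) + 1) (g j) x)).det) x := by
  have hrw : wronskian n g = fun y => ∑ σ : Equiv.Perm (Fin n),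
      ((Equiv.Perm.sign σ : ℤ) : ℝ) * ∏ i : Fin n, iteratedDeriv ((σ i : Fin n) : ℕ) (g i) y := by
    funext y
    rw [wronskian, Matrix.det_apply']
    rfl
  rw [hrw]
  have key : ∀ σ : Equiv.Perm (Fin n),
      HasDerivAt (fun y => ∏ i : Fin n, iteratedDeriv ((σ i : Fin n) : ℕ) (g i) y)
        (∑ i : Fin n, (∏ j ∈ Finset.univ.erase i, iteratedDeriv ((σ j : Fin n) : ℕ) (g j) x) •
          iteratedDeriv (((σ i : Fin n) : ℕ) + 1) (g i) x) x :=
    fun σ => HasDerivAt.fun_finsetProd (fun i _ => hasDerivAt_iteratedDeriv (hg i) _ x)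
  have H := HasDerivAt.fun_sum (u := Finset.univ)
    (fun σ _ => (key σ).const_mul ((Equiv.Perm.sign σ : ℤ) : ℝ))
  refine H.congr_deriv (Eq.symm ?_)
  simp only [Matrix.det_apply']
  rw [Finset.sum_comm]
  refine Finset.sum_congr rfl fun σ _ => ?_
  rw [← Finset.mul_sum]
  congr 1
  refine (Fintype.sum_equiv σ _ _ fun i₀ => ?_).symm
  rw [smul_eq_mul, ← Finset.mul_prod_erase Finset.univ _ (Finset.mem_univ i₀),
    Matrix.updateRow_self, mul_comm]
  congr 1
  refine Finset.prod_congr rfl fun i hi => ?_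
  rw [Matrix.updateRow_ne (σ.injective.ne (Finset.ne_of_mem_erase hi))]
  rfl

/-- Matrix of derivatives of orders `0,…,s-1, s+1` (last row bumped). -/
noncomputable def dmat (s : ℕ) (g : Fin (s + 1) → ℝ → ℝ) (x : ℝ) :
    Matrix (Fin (s + 1)) (Fin (s + 1)) ℝ :=
  Matrix.of fun i j => iteratedDeriv (if i = Fin.last s then s + 1 else (i : ℕ)) (g j) x

lemma hasDerivAt_wronskian_succ (s : ℕ) (g : Fin (s + 1) → ℝ → ℝ)
    (hg : ∀ j, ContDiff ℝ (⊤ : ℕ∞) (g j)) (x : ℝ) :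
    HasDerivAt (wronskian (s + 1) g) ((dmat s g x).det) x := by
  have H := hasDerivAt_wronskian (s + 1) g hg x
  convert H using 1
  symm
  rw [Finset.sum_eq_single (Fin.last s)]
  · congr 1
    ext i j
    rw [Matrix.updateRow_apply]
    by_cases hi : i = Fin.last s <;> simp [hi, dmat]
  · intro r _ hr
    have hrs : (r : ℕ) < s := lt_of_le_of_ne (Nat.lt_succ_iff.mp r.isLt) (fun h => hr (Fin.ext h))
    refine Matrix.det_zero_of_row_eq (i := r) (j := ⟨(r : ℕ) + 1, by omega⟩)
      (fun h => by simp [Fin.ext_iff] at h) ?_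
    funext j
    rw [Matrix.updateRow_self, Matrix.updateRow_ne (by simp [Fin.ext_iff])]
    rfl
  · simp

lemma det_updateColumn_single_last (n : ℕ) (M : Matrix (Fin (n + 1)) (Fin (n + 1)) ℝ) :
    (M.updateCol (Fin.last n) (Pi.single (Fin.last n) 1)).det =
      (M.submatrix Fin.castSucc Fin.castSucc).det := by
  rw [Matrix.det_succ_column _ (Fin.last n), Finset.sum_eq_single (Fin.last n)]
  · rw [Matrix.updateCol_self, Pi.single_eq_same]
    have hpow : (-1 : ℝ) ^ ((Fin.last n : ℕ) + (Fin.last n : ℕ)) = 1 :=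
      Even.neg_one_pow ⟨n, by simp [Fin.val_last]⟩
    rw [hpow, one_mul, one_mul]
    congr 1
    ext i j
    simp [Fin.succAbove_last, Matrix.updateCol_ne (Fin.castSucc_lt_last j).ne]
  · intro i _ hi
    rw [Matrix.updateCol_self, Pi.single_eq_of_ne hi, mul_zero, zero_mul]
  · simp

lemma jacobi (m : ℕ) (f : Fin (m + 1) → ℝ → ℝ) (h : ℝ → ℝ)
    (hf : ∀ j, ContDiff ℝ (⊤ : ℕ∞) (f j)) (hh : ContDiff ℝ (⊤ : ℕ∞) h) (x : ℝ)
    (hA : wronskian (m + 1) f x ≠ 0) :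
    wronskian m (fun j => f j.castSucc) x *
      wronskian (m + 2) (fun j : Fin (m + 2) =>
        if hj : (j : ℕ) < m + 1 then f ⟨j, hj⟩ else h) x =
    wronskian (m + 1) f x *
        deriv (wronskian (m + 1) (fun j => if j = Fin.last m then h else f j)) x -
      deriv (wronskian (m + 1) f) x *
        wronskian (m + 1) (fun j => if j = Fin.last m then h else f j) x := by
  classical
  set fext : Fin (m + 2) → ℝ → ℝ :=
    fun j => if hj : (j : ℕ) < m + 1 then f ⟨j, hj⟩ else h with hfext
  set fB : Fin (m + 1) → ℝ → ℝ := fun j => if j = Fin.last m then h else f j with hfB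
  have hfBsm : ∀ j, ContDiff ℝ (⊤ : ℕ∞) (fB j) := by
    intro j; rw [hfB]; dsimp only; split
    · exact hh
    · exact hf j
  have hfext_cast : ∀ j : Fin (m + 1), fext j.castSucc = f j := by
    intro j
    rw [hfext]; dsimp only
    rw [dif_pos (by simpa using j.isLt)]
    congr 1
  have hfext_last : fext (Fin.last (m + 1)) = h := by
    rw [hfext]; dsimp only
    rw [dif_neg (by simp)]
  set MA : Matrix (Fin (m + 1)) (Fin (m + 1)) ℝ :=
    Matrix.of (fun i j => iteratedDeriv (i : ℕ) (f j) x) with hMA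
  set MA' : Matrix (Fin (m + 1)) (Fin (m + 1)) ℝ := dmat m f x with hMA'
  set Mfull : Matrix (Fin (m + 2)) (Fin (m + 2)) ℝ :=
    Matrix.of (fun i j => iteratedDeriv (i : ℕ) (fext j) x) with hMfull
  set emb' : Fin (m + 1) → Fin (m + 2) :=
    fun i => if i = Fin.last m then Fin.last (m + 1) else i.castSucc with hemb'
  set Wx : ℝ := wronskian m (fun j => f j.castSucc) x with hWx
  set Ax : ℝ := wronskian (m + 1) f x with hAx
  set dAx : ℝ := deriv (wronskian (m + 1) f) x with hdAx
  have hdA : dAx = MA'.det := (hasDerivAt_wronskian_succ m f hf x).deriv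
  have hAdet : Ax = MA.det := rfl
  set L : (Fin (m + 2) → ℝ) →ₗ[ℝ] ℝ :=
    Wx • (LinearMap.proj (Fin.last (m + 1)) ∘ₗ Matrix.cramer Mfull)
      - Ax • ((LinearMap.proj (Fin.last m) ∘ₗ Matrix.cramer MA') ∘ₗ LinearMap.funLeft ℝ ℝ emb')
      + dAx • ((LinearMap.proj (Fin.last m) ∘ₗ Matrix.cramer MA) ∘ₗ
          LinearMap.funLeft ℝ ℝ Fin.castSucc) with hLdef
  have hLapp : ∀ v : Fin (m + 2) → ℝ, L v =
      Wx * (Mfull.updateCol (Fin.last (m + 1)) v).det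
        - Ax * (MA'.updateCol (Fin.last m) (v ∘ emb')).det
        + dAx * (MA.updateCol (Fin.last m) (v ∘ Fin.castSucc)).det := by
    intro v
    simp only [hLdef, LinearMap.add_apply, LinearMap.sub_apply, LinearMap.smul_apply,
      LinearMap.comp_apply, LinearMap.proj_apply, LinearMap.funLeft_apply,
      Matrix.cramer_apply, smul_eq_mul]
    rfl
  -- the invertible matrix P
  set P : Matrix (Fin (m + 2)) (Fin (m + 2)) ℝ :=
    Mfull.updateCol (Fin.last (m + 1)) (Pi.single (Fin.last (m + 1)) 1) with hP
  have hsubfull : Mfull.submatrix Fin.castSucc Fin.castSucc = MA := by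
    ext i j
    simp only [hMfull, hMA, Matrix.submatrix_apply, Matrix.of_apply, Fin.coe_castSucc]
    rw [hfext_cast]
  have hPdet : P.det = Ax := by
    rw [hP, det_updateColumn_single_last, hsubfull, hAdet]
  have hsubMA' : MA'.submatrix Fin.castSucc Fin.castSucc =
      Matrix.of (fun i j : Fin m => iteratedDeriv (i : ℕ) (f j.castSucc) x) := by
    ext i j
    simp only [hMA', dmat, Matrix.submatrix_apply, Matrix.of_apply]
    rw [if_neg (Fin.castSucc_lt_last i).ne]
    simp
  -- L kills all columns of P
  have hcol : ∀ j : Fin (m + 2), L (fun i => P i j) = 0 := by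
    intro j
    by_cases hj : (j : ℕ) < m + 1
    · -- column is the jet of f j'
      set j' : Fin (m + 1) := ⟨(j : ℕ), hj⟩ with hj'
      have hjne : j ≠ Fin.last (m + 1) := by
        intro hcontra; rw [hcontra] at hj; simp at hj
      have hcolv : (fun i => P i j) = fun i : Fin (m + 2) => iteratedDeriv (i : ℕ) (f j') x := by
        funext i
        rw [hP, Matrix.updateCol_ne hjne, hMfull]
        simp only [Matrix.of_apply]
        congr 1
        rw [hfext]; dsimp only
        rw [dif_pos hj]
      rw [hcolv, hLapp]
      -- first determinant always vanishes (duplicate columns j and last)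
      have hdet1 : (Mfull.updateCol (Fin.last (m + 1))
          (fun i : Fin (m + 2) => iteratedDeriv (i : ℕ) (f j') x)).det = 0 := by
        rw [← Matrix.det_transpose]
        refine Matrix.det_zero_of_row_eq hjne ?_
        funext i
        simp only [Matrix.transpose_apply]
        rw [Matrix.updateCol_ne hjne, Matrix.updateCol_self, hMfull]
        simp only [Matrix.of_apply]
        congr 1
        rw [hfext]; dsimp only
        rw [dif_pos hj]
      have hv2 : (fun i : Fin (m + 2) => iteratedDeriv (i : ℕ) (f j') x) ∘ emb' = fun i => MA' i j' := by
        funext i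
        simp only [Function.comp_apply, hemb', hMA', dmat, Matrix.of_apply]
        by_cases hi : i = Fin.last m <;> simp [hi]
      have hv3 : (fun i : Fin (m + 2) => iteratedDeriv (i : ℕ) (f j') x) ∘ Fin.castSucc =
          fun i => MA i j' := by
        funext i
        simp [hMA]
      rw [hdet1, hv2, hv3]
      by_cases hjl : j' = Fin.last m
      · rw [hjl]
        rw [show (fun i => MA' i (Fin.last m)) = fun i => MA' i (Fin.last m) from rfl]
        rw [Matrix.updateCol_eq_self, Matrix.updateCol_eq_self, ← hdA, ← hAdet]
        ring
      · have hdet2 : (MA'.updateCol (Fin.last m) (fun i => MA' i j')).det = 0 := by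
          rw [← Matrix.det_transpose]
          exact Matrix.det_zero_of_row_eq hjl (funext fun i => by
            simp only [Matrix.transpose_apply]
            rw [Matrix.updateCol_ne hjl, Matrix.updateCol_self])
        have hdet3 : (MA.updateCol (Fin.last m) (fun i => MA i j')).det = 0 := by
          rw [← Matrix.det_transpose]
          exact Matrix.det_zero_of_row_eq hjl (funext fun i => by
            simp only [Matrix.transpose_apply]
            rw [Matrix.updateCol_ne hjl, Matrix.updateCol_self])
        rw [hdet2, hdet3]
        ring
    · -- j is the last column: the single vector
      have hjl : j = Fin.last (m + 1) := by
        apply Fin.ext; simp only [Fin.val_last]; omega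
      have hcolv : (fun i => P i j) = Pi.single (Fin.last (m + 1)) 1 := by
        funext i
        rw [hP, hjl, Matrix.updateCol_self]
      rw [hcolv, hLapp]
      have h1 : (Mfull.updateCol (Fin.last (m + 1))
          (Pi.single (Fin.last (m + 1)) 1)).det = Ax := by
        rw [det_updateColumn_single_last, hsubfull, hAdet]
      have hv2 : (Pi.single (Fin.last (m + 1)) (1:ℝ)) ∘ emb' =
          Pi.single (Fin.last m) (1:ℝ) := by
        funext i
        simp only [Function.comp_apply, hemb']
        by_cases hi : i = Fin.last m
        · subst hi
          rw [if_pos rfl, Pi.single_eq_same, Pi.single_eq_same]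
        · rw [if_neg hi, Pi.single_eq_of_ne (Fin.castSucc_lt_last i).ne,
            Pi.single_eq_of_ne hi]
      have hv3 : (Pi.single (Fin.last (m + 1)) (1:ℝ)) ∘ Fin.castSucc =
          (0 : Fin (m + 1) → ℝ) := by
        funext i
        simp only [Function.comp_apply, Pi.zero_apply]
        exact Pi.single_eq_of_ne (Fin.castSucc_lt_last i).ne 1
      have h2 : (MA'.updateCol (Fin.last m) (Pi.single (Fin.last m) 1)).det = Wx := by
        rw [det_updateColumn_single_last, hsubMA']
        rfl
      have h3 : (MA.updateCol (Fin.last m) (0 : Fin (m + 1) → ℝ)).det = 0 := by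
        apply Matrix.det_eq_zero_of_column_eq_zero (Fin.last m)
        intro i
        rw [Matrix.updateCol_self]
        rfl
      rw [hv2, hv3, h1, h2, h3]
      ring
  -- hence L = 0
  set a : Fin (m + 2) → ℝ := fun i => L (Pi.single i 1) with ha
  have hrep : ∀ v : Fin (m + 2) → ℝ, L v = ∑ i, v i * a i := by
    intro v
    have hv : v = ∑ i : Fin (m + 2), v i • (Pi.single i (1:ℝ) : Fin (m + 2) → ℝ) := by
      funext j'
      symm
      rw [Finset.sum_apply]
      simp [Pi.single_apply]
    conv_lhs => rw [hv]
    rw [map_sum]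
    exact Finset.sum_congr rfl fun i _ => by rw [LinearMap.map_smul, smul_eq_mul]
  have hunit : IsUnit P.det := by rw [hPdet]; exact isUnit_iff_ne_zero.mpr hA
  have hvec : Matrix.vecMul a P = 0 := by
    funext j
    have h0 := (hrep (fun i => P i j)).symm.trans (hcol j)
    simp only [Matrix.vecMul, dotProduct, Pi.zero_apply]
    rw [← h0]
    exact Finset.sum_congr rfl fun i _ => mul_comm _ _
  have ha0 : a = 0 := by
    have h1 : Matrix.vecMul a (P * P⁻¹) = 0 := by
      rw [← Matrix.vecMul_vecMul, hvec, Matrix.zero_vecMul]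
    rwa [Matrix.mul_nonsing_inv P hunit, Matrix.vecMul_one] at h1
  have hL0 : ∀ v, L v = 0 := fun v => by
    rw [hrep v, ha0]; simp
  -- evaluate at the jet of h
  have hfinal := hL0 (fun i => iteratedDeriv (i : ℕ) h x)
  rw [hLapp] at hfinal
  have e1 : Mfull.updateCol (Fin.last (m + 1))
      (fun i : Fin (m + 2) => iteratedDeriv (i : ℕ) h x) = Mfull := by
    have : (fun i : Fin (m + 2) => iteratedDeriv (i : ℕ) h x) =
        fun i => Mfull i (Fin.last (m + 1)) := by
      funext i
      rw [hMfull]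
      simp only [Matrix.of_apply]
      rw [hfext_last]
    rw [this, Matrix.updateCol_eq_self]
  have e2 : MA'.updateCol (Fin.last m)
      ((fun i : Fin (m + 2) => iteratedDeriv (i : ℕ) h x) ∘ emb') = dmat m fB x := by
    ext i j
    rw [Matrix.updateCol_apply]
    by_cases hj : j = Fin.last m
    · rw [if_pos hj, hj]
      have hfBl : fB (Fin.last m) = h := by rw [hfB]; simp
      simp only [Function.comp_apply, dmat, Matrix.of_apply, hfBl]
      congr 1
      by_cases hi : i = Fin.last m <;> simp [hemb', hi]
    · rw [if_neg hj]
      simp only [hMA', dmat, Matrix.of_apply, hfB]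
      rw [if_neg hj]
  have e3 : MA.updateCol (Fin.last m)
      ((fun i : Fin (m + 2) => iteratedDeriv (i : ℕ) h x) ∘ Fin.castSucc) =
      Matrix.of (fun i j : Fin (m + 1) => iteratedDeriv (i : ℕ) (fB j) x) := by
    ext i j
    rw [Matrix.updateCol_apply]
    by_cases hj : j = Fin.last m
    · rw [if_pos hj, hj]
      have hfBl : fB (Fin.last m) = h := by rw [hfB]; simp
      simp only [Function.comp_apply, Matrix.of_apply, hfBl]
      simp
    · rw [if_neg hj]
      simp only [hMA, Matrix.of_apply, hfB]
      rw [if_neg hj]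
  rw [e1, e2, e3] at hfinal
  have hdB : deriv (wronskian (m + 1) fB) x = (dmat m fB x).det :=
    (hasDerivAt_wronskian_succ m fB hfBsm x).deriv
  have hBval : wronskian (m + 1) fB x =
      (Matrix.of (fun i j : Fin (m + 1) => iteratedDeriv (i : ℕ) (fB j) x)).det := rfl
  have hFull : wronskian (m + 2) fext x = Mfull.det := rfl
  rw [hdB, hBval, hFull]
  linarith [hfinal]

end aux

/-- The non-standard Darboux orbit of the ghost-symmetry generating eigenfunctions:
`Φ_l^{(0)} = Φ_l` and `Φ_l^{(m+1)} = Φ₁^{(m)}·(Φ_{l+1}^{(m)}/Φ₁^{(m)})′`. -/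
noncomputable def darbouxPhi (Φ : ℕ → ℝ → ℝ) : ℕ → ℕ → ℝ → ℝ
  | 0, l => Φ l
  | m + 1, l => fun x =>
      darbouxPhi Φ m 1 x *
        deriv (fun y => darbouxPhi Φ m (l + 1) y / darbouxPhi Φ m 1 y) x

/-- for `l ≥ 1` with `k + l ≤ N`,
`Φ_l^{(k)} = W[Φ₁,…,Φ_k,Φ_{k+l}] / W[Φ₁,…,Φ_k]`; in particular
`Φ₁^{(k)} = W_{k+1}/W_k` (the eigenfunction form of (DB-1-k)). -/
theorem darboux_orbit_wronskian_ratio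
    (N k : ℕ) (Φ : ℕ → ℝ → ℝ)
    (hkN : k + 1 ≤ N)
    (hΦ : ∀ j, 1 ≤ j → j ≤ N → ContDiff ℝ (⊤ : ℕ∞) (Φ j))
    (hW : ∀ m, 1 ≤ m → m ≤ k + 1 → ∀ x,
      wronskian m (fun j => Φ ((j : ℕ) + 1)) x ≠ 0) :
    (∀ l, 1 ≤ l → k + l ≤ N → ∀ x,
      darbouxPhi Φ k l x =
        wronskian (k + 1) (fun j => if (j : ℕ) = k then Φ (k + l) else Φ ((j : ℕ) + 1)) x /
          wronskian k (fun j => Φ ((j : ℕ) + 1)) x) ∧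
    (∀ x, darbouxPhi Φ k 1 x =
      wronskian (k + 1) (fun j => Φ ((j : ℕ) + 1)) x /
        wronskian k (fun j => Φ ((j : ℕ) + 1)) x) := by
  have hWne : ∀ m', m' ≤ k + 1 → ∀ y,
      wronskian m' (fun j : Fin m' => Φ ((j : ℕ) + 1)) y ≠ 0 := by
    intro m' hm' y
    rcases Nat.eq_zero_or_pos m' with h0 | h1
    · subst h0
      simp [wronskian, Matrix.det_isEmpty]
    · exact hW m' h1 hm' y
  have main : ∀ m, m ≤ k → ∀ l, 1 ≤ l → m + l ≤ N → ∀ x,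
      darbouxPhi Φ m l x =
        wronskian (m + 1)
            (fun j : Fin (m + 1) => if (j : ℕ) = m then Φ (m + l) else Φ ((j : ℕ) + 1)) x /
          wronskian m (fun j : Fin m => Φ ((j : ℕ) + 1)) x := by
    intro m
    induction m with
    | zero =>
      intro _ l hl hN x
      have h1 : wronskian 0 (fun j : Fin 0 => Φ ((j : ℕ) + 1)) x = 1 := by
        simp [wronskian, Matrix.det_isEmpty]
      have h2 : wronskian 1
          (fun j : Fin 1 => if (j : ℕ) = 0 then Φ (0 + l) else Φ ((j : ℕ) + 1)) x = Φ l x := by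
        rw [wronskian, Matrix.det_fin_one]
        simp
      rw [h1, h2, div_one]
      rfl
    | succ m ih =>
      intro hmk l hl hN x
      have hmk' : m ≤ k := by omega
      set colA : Fin (m + 1) → ℝ → ℝ := fun j => Φ ((j : ℕ) + 1) with hcolA
      set colB : Fin (m + 1) → ℝ → ℝ :=
        fun j => if (j : ℕ) = m then Φ (m + (l + 1)) else Φ ((j : ℕ) + 1) with hcolB
      set W := wronskian m (fun j : Fin m => Φ ((j : ℕ) + 1)) with hWdef
      set A := wronskian (m + 1) colA with hAdef
      set B := wronskian (m + 1) colB with hBdef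
      have hWy : ∀ y, W y ≠ 0 := fun y => hWne m (by omega) y
      have hAy : ∀ y, A y ≠ 0 := fun y => hWne (m + 1) (by omega) y
      have hB1 : (fun j : Fin (m + 1) => if (j : ℕ) = m then Φ (m + 1) else Φ ((j : ℕ) + 1)) =
          colA := by
        funext j; by_cases hj : (j : ℕ) = m <;> simp [hcolA, hj]
      have hd1 : ∀ y, darbouxPhi Φ m 1 y = A y / W y := by
        intro y
        have h0 := ih hmk' 1 le_rfl (by omega) y
        rwa [hB1] at h0
      have hdl : ∀ y, darbouxPhi Φ m (l + 1) y = B y / W y := fun y =>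
        ih hmk' (l + 1) (by omega) (by omega) y
      have hfun : (fun y => darbouxPhi Φ m (l + 1) y / darbouxPhi Φ m 1 y) =
          fun y => B y / A y := by
        funext y
        rw [hdl y, hd1 y]
        field_simp
        rw [mul_comm (B y) (W y), mul_div_mul_left _ _ (hWy y)]
      have hsmA : ∀ j : Fin (m + 1), ContDiff ℝ (⊤ : ℕ∞) (colA j) := fun j =>
        hΦ ((j : ℕ) + 1) (by omega) (by have := j.isLt; omega)
      have hsmB : ∀ j : Fin (m + 1), ContDiff ℝ (⊤ : ℕ∞) (colB j) := by
        intro j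
        rw [hcolB]; dsimp only
        split
        · exact hΦ _ (by omega) (by omega)
        · exact hΦ _ (by omega) (by have := j.isLt; omega)
      have hdA := hasDerivAt_wronskian_succ m colA hsmA x
      have hdB := hasDerivAt_wronskian_succ m colB hsmB x
      set dA := (dmat m colA x).det with hdAdef
      set dB := (dmat m colB x).det with hdBdef
      have hderiv : deriv (fun y => B y / A y) x =
          (dB * A x - B x * dA) / (A x) ^ 2 := (hdB.div hdA (hAy x)).deriv
      -- Jacobi identity
      have jac := jacobi m colA (Φ (m + 1 + l)) hsmA
        (hΦ (m + 1 + l) (by omega) (by omega)) x (hAy x)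
      have hW' : (fun j : Fin m => colA j.castSucc) = fun j : Fin m => Φ ((j : ℕ) + 1) := by
        funext j; simp [hcolA]
      have hBmatch : (fun j : Fin (m + 1) =>
          if j = Fin.last m then Φ (m + 1 + l) else colA j) = colB := by
        funext j
        rw [hcolB]; dsimp only
        by_cases hj : (j : ℕ) = m
        · have harg : m + 1 + l = m + (l + 1) := by omega
          rw [if_pos (Fin.ext (by simp [hj])), if_pos hj, harg]
        · rw [if_neg (fun hc => hj (by rw [hc]; simp)), if_neg hj]
      have hFullmatch : (fun j : Fin (m + 2) =>
          if hj : (j : ℕ) < m + 1 then colA ⟨j, hj⟩ else Φ (m + 1 + l)) =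
          fun j : Fin (m + 1 + 1) =>
            if (j : ℕ) = m + 1 then Φ (m + 1 + l) else Φ ((j : ℕ) + 1) := by
        funext j
        by_cases hj : (j : ℕ) = m + 1
        · rw [dif_neg (by omega), if_pos hj]
        · have hlt : (j : ℕ) < m + 1 := by have := j.isLt; omega
          rw [dif_pos hlt, if_neg hj]
      rw [hW', hBmatch, hFullmatch, hdB.deriv, hdA.deriv] at jac
      -- assemble
      show darbouxPhi Φ m 1 x *
          deriv (fun y => darbouxPhi Φ m (l + 1) y / darbouxPhi Φ m 1 y) x = _
      rw [hfun, hd1 x, hderiv]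
      set Full := wronskian (m + 1 + 1)
        (fun j : Fin (m + 1 + 1) => if (j : ℕ) = m + 1 then Φ (m + 1 + l) else Φ ((j : ℕ) + 1))
        with hFulldef
      have hFullval : Full x = (A x * dB - dA * B x) / W x := by
        rw [eq_div_iff (hWy x)]
        linarith [jac]
      rw [hFullval]
      have hAx := hAy x
      have hWx := hWy x
      field_simp
  refine ⟨fun l hl hN x => main k le_rfl l hl hN x, fun x => ?_⟩
  have hcols : (fun j : Fin (k + 1) => if (j : ℕ) = k then Φ (k + 1) else Φ ((j : ℕ) + 1)) =
      fun j : Fin (k + 1) => Φ ((j : ℕ) + 1) := by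
    funext j
    by_cases hj : (j : ℕ) = k <;> simp [hj]
  have h0 := main k le_rfl 1 le_rfl (by omega) x
  rwa [hcols] at h0
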